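/- arXiv:1405.5299 — 5 statements merged into one kernel-verified Lean document; each statement's English description precedes it below -/
import Mathlib

section
/- In a triangulated category, if in a distinguished triangle X → Y → Z → ΣX the identity of X is annihilated by r (i.e., r·id_X = 0) and the identity of Z is annihilated by s (i.e., s·id_Z = 0), where r, s are elements of a commutative ring R acting centrally on the category, then (rs)·id_Y = 0. -/
/-!
Since `s` kills `Z`, the morphism `s • 𝟙 Y` composes to zero with `Y ⟶ Z`, so by exactness of
`Hom(Y, -)` on the triangle it factors as `t ≫ f` through `X`; then `r` kills it because `r`
kills `X`.
-/

open CategoryTheory Limits Pretriangulated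

universe v u

variable (C : Type u) [Category.{v} C] [Preadditive C] [HasZeroObject C]
  [HasShift C ℤ] [∀ n : ℤ, (shiftFunctor C n).Additive] [Pretriangulated C]

def starOp (S T : Set C) : Set C :=
  {E | ∃ (A B : C) (f : A ⟶ E) (g : E ⟶ B) (h : B ⟶ A⟦(1 : ℤ)⟧),
    A ∈ S ∧ B ∈ T ∧ Triangle.mk f g h ∈ distTriang C}

lemma CategoryTheory.Linear.smul_eq_zero_of_smul_id_eq_zero {D : Type*} [Category D]
    [Preadditive D] {R : Type*} [Semiring R] [Linear R D] {r : R} {X Y : D}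
    (hY : r • 𝟙 Y = 0) (φ : X ⟶ Y) : r • φ = 0 := by
  rw [← Category.comp_id φ, ← Linear.comp_smul, hY, comp_zero]

lemma CategoryTheory.Pretriangulated.exists_smul_id_eq_comp_of_smul_id_eq_zero {R : Type*}
    [Semiring R] [Linear R C] {s : R} {X Y Z : C} {f : X ⟶ Y} {g : Y ⟶ Z}
    {h : Z ⟶ X⟦(1 : ℤ)⟧} (hdist : Triangle.mk f g h ∈ distTriang C) (hZ : s • 𝟙 Z = 0) :
    ∃ t : Y ⟶ X, s • 𝟙 Y = t ≫ f := by
  refine Triangle.coyoneda_exact₂ _ hdist (s • 𝟙 Y) ?_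
  change (s • 𝟙 Y) ≫ g = 0
  rw [Linear.smul_comp, Category.id_comp]
  exact Linear.smul_eq_zero_of_smul_id_eq_zero hZ g

/-- in an `R`-linear triangulated category, in a distinguished triangle
`X ⟶ Y ⟶ Z ⟶ X⟦1⟧`, if `r • 𝟙 X = 0` and `s • 𝟙 Z = 0` then `(r * s) • 𝟙 Y = 0`. -/
theorem kill_of_triangle (R : Type*) [CommRing R] [Linear R C]
    [∀ n : ℤ, Functor.Linear R (shiftFunctor C n)]
    (r s : R) (X Y Z : C) (f : X ⟶ Y) (g : Y ⟶ Z) (h : Z ⟶ X⟦(1 : ℤ)⟧)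
    (hdist : Triangle.mk f g h ∈ distTriang C)
    (hX : r • (𝟙 X) = 0) (hZ : s • (𝟙 Z) = 0) :
    (r * s) • (𝟙 Y) = 0 := by
  obtain ⟨t, ht⟩ := exists_smul_id_eq_comp_of_smul_id_eq_zero C hdist hZ
  rw [mul_smul, ht, ← Linear.smul_comp, Linear.smul_eq_zero_of_smul_id_eq_zero hX t, zero_comp]
end

section
/- Ghost Lemma: Let T be a triangulated category with a full subcategory P of 'projective generators', and call a morphism f : X → Y a ghost if Hom(Σⁿ P, f) = 0 for all P ∈ P and all integers n. If g : X → Y is an n-fold composition of ghosts and Q is an object built from P by n-fold extensions (i.e., Q ∈ P^{*n} := P * P * ... * P, closed under shifts, finite direct sums and retracts at each step), then Hom(Q, g) = 0. -/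
open CategoryTheory Limits Pretriangulated

universe v u

variable (C : Type u) [Category.{v} C] [Preadditive C] [HasZeroObject C]
  [HasShift C ℤ] [∀ n : ℤ, (shiftFunctor C n).Additive] [Pretriangulated C]

variable [HasBinaryBiproducts C]

/-- Closure of a class of objects under finite direct sums, retracts and shifts. -/
inductive AddClosure (S : Set C) : C → Prop
  | of (X : C) : X ∈ S → AddClosure S X
  | zero (X : C) : IsZero X → AddClosure S X
  | shift (X : C) (k : ℤ) : AddClosure S X → AddClosure S (X⟦k⟧)
  | sum (X Y : C) : AddClosure S X → AddClosure S Y → AddClosure S (X ⊞ Y)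
  | retract (X Y : C) (i : X ⟶ Y) (p : Y ⟶ X) :
      i ≫ p = 𝟙 X → AddClosure S Y → AddClosure S X

/-- `pow C S n` is the `n`-fold diamond `S ⋄ ⋯ ⋄ S`, where `S ⋄ T = add (S * T)`. -/
def pow (S : Set C) : ℕ → Set C
  | 0 => {X | IsZero X}
  | n + 1 => {X | AddClosure C (starOp C S (pow S n)) X}

/-- A morphism `f` is a `P`-ghost if every composite `Q⟦k⟧ ⟶ X ⟶ Y` with `Q ∈ P` vanishes. -/
def IsGhost (P : Set C) {X Y : C} (f : X ⟶ Y) : Prop :=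
  ∀ Q ∈ P, ∀ (k : ℤ) (g : Q⟦k⟧ ⟶ X), g ≫ f = 0

/-- `GhostPow C P n f` : `f` is an `n`-fold composite of `P`-ghosts. -/
inductive GhostPow (P : Set C) : ℕ → ∀ {X Y : C}, (X ⟶ Y) → Prop
  | zero {X Y : C} (f : X ⟶ Y) : GhostPow P 0 f
  | comp {n : ℕ} {X Y Z : C} (f : X ⟶ Y) (g : Y ⟶ Z) :
      IsGhost C P f → GhostPow P n g → GhostPow P (n + 1) (f ≫ g)

/-- The objects whose identity is annihilated by the scalar `r`. -/
def Tkill (R : Type*) [CommRing R] [Linear R C] (r : R) : Set C := {X | r • (𝟙 X) = 0}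

/-! The ghost lemma is an induction on `n`. The objects all of whose shifts map to zero under
`g` form a class closed under shifts, finite sums and retracts; and if `P` and `T` are killed by
`f` and `g` respectively, then `P * T` is killed by `f ≫ g`: for a triangle `A → E → B` and
`h : E⟦k⟧ ⟶ X`, the composite `h ≫ f` vanishes on `A⟦k⟧`, so it factors through `B⟦k⟧`,
where `g` kills it. -/

section Annihilator

variable {D : Type*} [Category D] [Preadditive D] [HasShift D ℤ]

def shiftAnnihilator {X Y : D} (g : X ⟶ Y) : Set D :=
  {Q | ∀ (k : ℤ) (h : Q⟦k⟧ ⟶ X), h ≫ g = 0}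

variable {X Y : D} {g : X ⟶ Y}

lemma comp_eq_zero_of_mem_shiftAnnihilator {Q : D} (hQ : Q ∈ shiftAnnihilator g)
    (h : Q ⟶ X) : h ≫ g = 0 :=
  zero_of_epi_comp ((shiftFunctorZero D ℤ).hom.app Q) (by rw [← Category.assoc]; exact hQ 0 _)

lemma mem_shiftAnnihilator_of_isZero {Q : D} (hQ : IsZero Q) : Q ∈ shiftAnnihilator g := by
  intro k h
  rw [((shiftFunctor D k).map_isZero hQ).eq_of_src h 0, zero_comp]

lemma shift_mem_shiftAnnihilator {Q : D} (hQ : Q ∈ shiftAnnihilator g) (k' : ℤ) :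
    Q⟦k'⟧ ∈ shiftAnnihilator g := by
  intro k h
  refine zero_of_epi_comp ((shiftFunctorAdd D k' k).hom.app Q) ?_
  rw [← Category.assoc]
  exact hQ (k' + k) _

lemma mem_shiftAnnihilator_of_retract {Q R : D} (i : Q ⟶ R) (p : R ⟶ Q) (hip : i ≫ p = 𝟙 Q)
    (hR : R ∈ shiftAnnihilator g) : Q ∈ shiftAnnihilator g := by
  intro k h
  have hh : h = i⟦k⟧' ≫ p⟦k⟧' ≫ h := by
    rw [← Category.assoc, ← Functor.map_comp, hip, CategoryTheory.Functor.map_id,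
      Category.id_comp]
  rw [hh, Category.assoc, Category.assoc, ← Category.assoc _ h, hR k, comp_zero]

lemma biprod_mem_shiftAnnihilator [HasBinaryBiproducts D]
    [∀ n : ℤ, (shiftFunctor D n).Additive] {Q₁ Q₂ : D}
    (h₁ : Q₁ ∈ shiftAnnihilator g) (h₂ : Q₂ ∈ shiftAnnihilator g) :
    (Q₁ ⊞ Q₂) ∈ shiftAnnihilator g := by
  intro k h
  have hid : 𝟙 ((Q₁ ⊞ Q₂)⟦k⟧) =
      biprod.fst⟦k⟧' ≫ biprod.inl⟦k⟧' + biprod.snd⟦k⟧' ≫ biprod.inr⟦k⟧' := by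
    rw [← Functor.map_comp, ← Functor.map_comp, ← Functor.map_add, biprod.total,
      CategoryTheory.Functor.map_id]
  rw [← Category.id_comp h, hid]
  simp only [Preadditive.add_comp, Category.assoc]
  rw [← Category.assoc _ h, h₁ k, ← Category.assoc _ h, h₂ k, comp_zero, comp_zero, add_zero]

lemma addClosure_subset_shiftAnnihilator [HasBinaryBiproducts D]
    [∀ n : ℤ, (shiftFunctor D n).Additive] {S : Set D} (hS : S ⊆ shiftAnnihilator g) {Q : D}
    (hQ : AddClosure D S Q) : Q ∈ shiftAnnihilator g := by
  induction hQ with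
  | of Q hQ => exact hS hQ
  | zero Q hQ => exact mem_shiftAnnihilator_of_isZero hQ
  | shift Q k _ ih => exact shift_mem_shiftAnnihilator ih k
  | sum Q₁ Q₂ _ _ ih₁ ih₂ => exact biprod_mem_shiftAnnihilator ih₁ ih₂
  | retract Q R i p hip _ ih => exact mem_shiftAnnihilator_of_retract i p hip ih

end Annihilator

section Triangulated

variable {D : Type*} [Category D] [Preadditive D] [HasZeroObject D] [HasShift D ℤ]
  [∀ n : ℤ, (shiftFunctor D n).Additive] [Pretriangulated D]

lemma comp_eq_zero_of_distinguished {T : Triangle D} (hT : T ∈ distTriang D) {Y Z : D}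
    (u : T.obj₂ ⟶ Y) (hu : T.mor₁ ≫ u = 0) (g : Y ⟶ Z) (hg : ∀ φ : T.obj₃ ⟶ Y, φ ≫ g = 0) :
    u ≫ g = 0 := by
  obtain ⟨φ, rfl⟩ := Triangle.yoneda_exact₂ T hT u hu
  rw [Category.assoc, hg φ, comp_zero]

lemma starOp_subset_shiftAnnihilator_comp {S T : Set D} {X Y Z : D} {f : X ⟶ Y} {g : Y ⟶ Z}
    (hS : S ⊆ shiftAnnihilator f) (hT : T ⊆ shiftAnnihilator g) :
    starOp D S T ⊆ shiftAnnihilator (f ≫ g) := by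
  rintro E ⟨A, B, a, b, c, hA, hB, hdist⟩ k h
  rw [← Category.assoc]
  refine comp_eq_zero_of_distinguished (Triangle.shift_distinguished _ hdist k) (h ≫ f) ?_ g
    (hT hB k)
  change (k.negOnePow • a⟦k⟧') ≫ h ≫ f = 0
  rw [Linear.units_smul_comp, ← Category.assoc, hS hA k, smul_zero]

lemma pow_subset_shiftAnnihilator [HasBinaryBiproducts D] {P : Set D} {n : ℕ} {X Y : D}
    {g : X ⟶ Y} (hg : GhostPow D P n g) : pow D P n ⊆ shiftAnnihilator g := by
  induction hg with
  | zero g => exact fun Q hQ => mem_shiftAnnihilator_of_isZero hQ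
  | comp f g hf _ ih =>
    exact fun Q hQ => addClosure_subset_shiftAnnihilator
      (starOp_subset_shiftAnnihilator_comp hf ih) hQ

end Triangulated

theorem ghost_lemma (P : Set C)
    (n : ℕ) {X Y : C} (g : X ⟶ Y) (hg : GhostPow C P n g)
    (Q : C) (hQ : Q ∈ pow C P n) (h : Q ⟶ X) :
    h ≫ g = 0 :=
  comp_eq_zero_of_mem_shiftAnnihilator (pow_subset_shiftAnnihilator hg hQ) h
end

section
/- Let A be an R-linear abelian category with enough projectives, T = D^b(A), r ∈ R, n ≥ 0. If T = P_n ⋄ T_r (every bounded complex is, up to retracts, an extension of an object of T_r by an object built from n-fold extensions of projectives), then r annihilates every n-fold composite of ghost morphisms in T. -/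
open CategoryTheory Limits Pretriangulated

universe v u

variable (C : Type u) [Category.{v} C] [Preadditive C] [HasZeroObject C]
  [HasShift C ℤ] [∀ n : ℤ, (shiftFunctor C n).Additive] [Pretriangulated C]

variable [HasBinaryBiproducts C]

section Derived

variable (A : Type u) [Category.{v} A] [Abelian A] [HasDerivedCategory A]

/-- Objects of the derived category with bounded cohomology (i.e. objects of `D^b(A)`). -/
def Bdd (X : DerivedCategory A) : Prop :=
  ∃ a b : ℤ, ∀ i : ℤ, (i < a ∨ b < i) → IsZero ((DerivedCategory.homologyFunctor A i).obj X)

/-- The projective objects of `A`, viewed in the derived category. -/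
def ProjCls : Set (DerivedCategory A) :=
  {X | ∃ P : A, Projective P ∧ Nonempty (X ≅ (DerivedCategory.singleFunctor A 0).obj P)}

end Derived

/-!
Ghost lemma: an `n`-fold composite of `P`-ghosts out of an object of `P_n` vanishes, since the
first ghost kills the `P`-part of a triangle `Q ⟶ E ⟶ B ⟶ Q⟦1⟧` and the remaining composite
factors through `B ∈ P_{n-1}`. So an `n`-fold ghost out of `E ∈ P_n * T_r` vanishes on the
`P_n`-part and factors through the `T_r`-part, where `r` kills it. The class of objects out of
which `r` annihilates all `n`-fold ghosts is closed under zero objects, shifts, sums and retracts,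
so it contains `P_n ⋄ T_r`.
-/

section Ghosts

variable {D : Type*} [Category D] [Preadditive D] [HasShift D ℤ] {P : Set D}

lemma IsGhost.comp_eq_zero_of_iso {X Y : D} {f : X ⟶ Y} (hf : IsGhost D P f) {Q : D}
    (hQ : Q ∈ P) (k : ℤ) {W : D} (e : W ≅ Q⟦k⟧) (g : W ⟶ X) : g ≫ f = 0 := by
  simpa using congrArg (e.hom ≫ ·) (hf Q hQ k (e.inv ≫ g))

lemma IsGhost.comp_eq_zero {X Y : D} {f : X ⟶ Y} (hf : IsGhost D P f) {Q : D} (hQ : Q ∈ P)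
    (g : Q ⟶ X) : g ≫ f = 0 :=
  hf.comp_eq_zero_of_iso hQ 0 ((shiftFunctorZero D ℤ).app Q).symm g

lemma IsGhost.shift [∀ k : ℤ, (shiftFunctor D k).Additive] {X Y : D} {f : X ⟶ Y}
    (hf : IsGhost D P f) (k : ℤ) : IsGhost D P (f⟦k⟧') := by
  intro Q hQ j g
  apply (shiftFunctor D (-k)).map_injective
  rw [Functor.map_comp, Functor.map_zero, shift_shift_neg', ← Category.assoc, ← Category.assoc,
    hf.comp_eq_zero_of_iso hQ (j + -k) ((shiftFunctorAdd D j (-k)).app Q).symm, zero_comp]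

lemma GhostPow.precomp {n : ℕ} {X Y Z : D} (g : X ⟶ Y) {f : Y ⟶ Z}
    (hf : GhostPow D P n f) : GhostPow D P n (g ≫ f) := by
  cases hf with
  | zero f => exact .zero _
  | comp f₁ f₂ h₁ h₂ =>
    rw [← Category.assoc]
    exact .comp _ _ (fun Q hQ k a => by rw [← Category.assoc]; exact h₁ Q hQ k _) h₂

lemma GhostPow.shift [∀ k : ℤ, (shiftFunctor D k).Additive] {n : ℕ} {X Y : D} {f : X ⟶ Y}
    (hf : GhostPow D P n f) (k : ℤ) : GhostPow D P n (f⟦k⟧') := by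
  induction hf with
  | zero f => exact .zero _
  | comp f₁ f₂ h₁ _ ih =>
    rw [Functor.map_comp]
    exact .comp _ _ (h₁.shift k) ih

section Annihilated

variable {R : Type*} [Semiring R] [Linear R D]

variable (P) in
def ghostAnnihilated (n : ℕ) (r : R) : Set D :=
  {X | ∀ ⦃Y : D⦄ (f : X ⟶ Y), GhostPow D P n f → r • f = 0}

-- Vanishing is annihilation by `1 : ℤ`, so the closure lemmas below serve both inductions.
lemma mem_ghostAnnihilated_one_iff {n : ℕ} {X : D} :
    X ∈ ghostAnnihilated P n (1 : ℤ) ↔ ∀ ⦃Y : D⦄ (f : X ⟶ Y), GhostPow D P n f → f = 0 := by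
  simp only [ghostAnnihilated, Set.mem_ofPred_eq, one_smul]

variable {n : ℕ} {r : R}

lemma mem_ghostAnnihilated_of_isZero {X : D} (hX : IsZero X) : X ∈ ghostAnnihilated P n r :=
  fun _ f _ => by rw [hX.eq_zero_of_src f, smul_zero]

lemma shift_mem_ghostAnnihilated [∀ k : ℤ, (shiftFunctor D k).Additive]
    [∀ k : ℤ, Functor.Linear R (shiftFunctor D k)] {X : D} (hX : X ∈ ghostAnnihilated P n r)
    (k : ℤ) : X⟦k⟧ ∈ ghostAnnihilated P n r := by
  intro Y f hf
  let e := (shiftFunctorCompIsoId D k (-k) (add_neg_cancel k)).app X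
  have hshift : e.inv ≫ (r • f⟦-k⟧') = 0 := by
    rw [Linear.comp_smul]
    exact hX _ ((hf.shift (-k)).precomp e.inv)
  apply (shiftFunctor D (-k)).map_injective
  rwa [Functor.map_smul, Functor.map_zero, ← Preadditive.IsIso.comp_left_eq_zero (f := e.inv)]

lemma biprod_mem_ghostAnnihilated [HasBinaryBiproducts D] {X X' : D}
    (hX : X ∈ ghostAnnihilated P n r) (hX' : X' ∈ ghostAnnihilated P n r) :
    (X ⊞ X') ∈ ghostAnnihilated P n r := by
  intro Y f hf
  apply biprod.hom_ext' <;> rw [comp_zero, Linear.comp_smul]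
  · exact hX _ (hf.precomp _)
  · exact hX' _ (hf.precomp _)

lemma mem_ghostAnnihilated_of_retract {X X' : D} (i : X ⟶ X') (p : X' ⟶ X) (hip : i ≫ p = 𝟙 X)
    (hX' : X' ∈ ghostAnnihilated P n r) : X ∈ ghostAnnihilated P n r := by
  intro Y f hf
  rw [← Category.id_comp f, ← hip, Category.assoc, ← Linear.comp_smul,
    hX' _ (hf.precomp p), comp_zero]

lemma addClosure_subset_ghostAnnihilated [∀ k : ℤ, (shiftFunctor D k).Additive]
    [∀ k : ℤ, Functor.Linear R (shiftFunctor D k)] [HasBinaryBiproducts D] {S : Set D}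
    (hS : S ⊆ ghostAnnihilated P n r) {X : D} (hX : AddClosure D S X) :
    X ∈ ghostAnnihilated P n r := by
  induction hX with
  | of X hX => exact hS hX
  | zero X hX => exact mem_ghostAnnihilated_of_isZero hX
  | shift X k _ ih => exact shift_mem_ghostAnnihilated ih k
  | sum X X' _ _ ih ih' => exact biprod_mem_ghostAnnihilated ih ih'
  | retract X X' i p hip _ ih => exact mem_ghostAnnihilated_of_retract i p hip ih

end Annihilated

variable [HasZeroObject D] [∀ k : ℤ, (shiftFunctor D k).Additive] [Pretriangulated D]

lemma starOp_subset_ghostAnnihilated_succ {S : Set D} {n : ℕ}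
    (hS : S ⊆ ghostAnnihilated P n (1 : ℤ)) :
    starOp D P S ⊆ ghostAnnihilated P (n + 1) (1 : ℤ) := by
  rintro E ⟨Q, B, i, π, _, hQ, hB, hT⟩
  rw [mem_ghostAnnihilated_one_iff]
  rintro _ _ (_ | ⟨f₁, f₂, hf₁, hf₂⟩)
  obtain ⟨h : B ⟶ _, hh : f₁ = π ≫ h⟩ := Triangle.yoneda_exact₂ _ hT f₁ (hf₁.comp_eq_zero hQ i)
  rw [hh, Category.assoc, mem_ghostAnnihilated_one_iff.1 (hS hB) _ (hf₂.precomp h), comp_zero]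

lemma pow_subset_ghostAnnihilated [HasBinaryBiproducts D] (n : ℕ) :
    pow D P n ⊆ ghostAnnihilated P n (1 : ℤ) := by
  induction n with
  | zero => exact fun _ hX => mem_ghostAnnihilated_of_isZero hX
  | succ n ih =>
    exact fun _ => addClosure_subset_ghostAnnihilated (starOp_subset_ghostAnnihilated_succ ih)

lemma starOp_tkill_subset_ghostAnnihilated {R : Type*} [CommRing R] [Linear R D] {S : Set D}
    {n : ℕ} (hS : S ⊆ ghostAnnihilated P n (1 : ℤ)) (r : R) :
    starOp D S (Tkill D R r) ⊆ ghostAnnihilated P n r := by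
  rintro E ⟨A, B, i, π, _, hA, hB, hT⟩ Y f hf
  obtain ⟨h : B ⟶ Y, hh : f = π ≫ h⟩ := Triangle.yoneda_exact₂ _ hT f
    (mem_ghostAnnihilated_one_iff.1 (hS hA) _ (hf.precomp i))
  have hB' : r • 𝟙 B = 0 := hB
  rw [hh, ← Linear.comp_smul, ← Category.id_comp h, ← Linear.smul_comp, hB', zero_comp,
    comp_zero]

end Ghosts

/-- if `D^b(A) = P_n ⋄ T_r`, then `r` annihilates every `n`-fold composite of
ghost morphisms between bounded complexes. -/
theorem ghosts_annihilated_of_decomposition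
    (R : Type*) [CommRing R] (A : Type u) [Category.{v} A] [Abelian A] [EnoughProjectives A]
    [HasDerivedCategory A] [Linear R (DerivedCategory A)]
    [∀ k : ℤ, Functor.Linear R (shiftFunctor (DerivedCategory A) k)]
    (r : R) (n : ℕ)
    (H : ∀ X : DerivedCategory A, Bdd A X →
      AddClosure (DerivedCategory A)
        (starOp (DerivedCategory A) (pow (DerivedCategory A) (ProjCls A) n)
          (Tkill (DerivedCategory A) R r)) X) :
    ∀ (X Y : DerivedCategory A), Bdd A X → Bdd A Y → ∀ f : X ⟶ Y,
      GhostPow (DerivedCategory A) (ProjCls A) n f → r • f = 0 := by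
  intro X Y hX _ f hf
  exact addClosure_subset_ghostAnnihilated
    (starOp_tkill_subset_ghostAnnihilated (pow_subset_ghostAnnihilated n) r) (H X hX) f hf
end

section
/- Let A be an R-linear abelian category with enough projectives and r ∈ R, n ≥ 0. If r annihilates every n-fold composite of ghost morphisms in D^b(A), then r·Ext^n_A(M, N) = 0 for all objects M, N of A. -/
open CategoryTheory Limits Pretriangulated

universe v u

variable (C : Type u) [Category.{v} C] [Preadditive C] [HasZeroObject C]
  [HasShift C ℤ] [∀ n : ℤ, (shiftFunctor C n).Additive] [Pretriangulated C]

variable [HasBinaryBiproducts C]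

/-!
Every `f : M ⟶ N⟦n + 1⟧` with `M, N ∈ A` is an `(n + 1)`-fold ghost. Choose an epimorphism
`P ⟶ M` from a projective, with kernel `K`. Since `Ext^{n+1}(P, N) = 0`, `f` factors through the
connecting morphism `δ : M ⟶ K⟦1⟧` of the triangle `K ⟶ P ⟶ M ⟶ K⟦1⟧`, the second factor being
the shift of some `K ⟶ N⟦n⟧`, an `n`-fold ghost by induction. And `δ` is a ghost: a map
`P'⟦k⟧ ⟶ M` from a projective `P'` vanishes for `k ≠ 0`, and for `k = 0` it lifts through
`P ⟶ M`, which `δ` kills.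
-/

section Ghosts

variable {𝒯 : Type*} [Category 𝒯] [Preadditive 𝒯] [HasShift 𝒯 ℤ] {P : Set 𝒯}

lemma IsGhost.shift_map {X Y : 𝒯} {f : X ⟶ Y} (hf : IsGhost 𝒯 P f) (m : ℤ) :
    IsGhost 𝒯 P (f⟦m⟧') := by
  intro Q hQ k g
  obtain ⟨h, hh⟩ := (shiftFunctor 𝒯 m).map_surjective
    (((shiftFunctorAdd' 𝒯 (k - m) m k (by lia)).app Q).inv ≫ g)
  have hg : g = ((shiftFunctorAdd' 𝒯 (k - m) m k (by lia)).app Q).hom ≫ h⟦m⟧' := by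
    simp [hh]
  rw [hg, Category.assoc, ← Functor.map_comp, hf Q hQ (k - m) h, Functor.map_zero, comp_zero]

lemma GhostPow.comp_right {n : ℕ} {X Y Z : 𝒯} {g : X ⟶ Y} (hg : GhostPow 𝒯 P n g)
    (e : Y ⟶ Z) : GhostPow 𝒯 P n (g ≫ e) := by
  induction hg with
  | zero f => exact .zero _
  | comp f g hf _ ih => simpa using GhostPow.comp _ _ hf (ih e)

lemma GhostPow.shift_map {n : ℕ} {X Y : 𝒯} {g : X ⟶ Y} (hg : GhostPow 𝒯 P n g) (m : ℤ) :
    GhostPow 𝒯 P n (g⟦m⟧') := by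
  induction hg with
  | zero f => exact .zero _
  | comp f g hf _ ih => simpa using GhostPow.comp _ _ (hf.shift_map m) ih

lemma ghostPow_shift_of_forall_ghostPow {n : ℕ} {X Y : 𝒯} {a b c : ℤ} (h : a + b = c)
    (H : ∀ g : X ⟶ Y⟦a⟧, GhostPow 𝒯 P n g) (w : X⟦b⟧ ⟶ Y⟦c⟧) : GhostPow 𝒯 P n w := by
  obtain ⟨w', hw'⟩ := (shiftFunctor 𝒯 b).map_surjective
    (w ≫ (shiftFunctorAdd' 𝒯 a b c h).hom.app Y)
  have hw : w = w'⟦b⟧' ≫ (shiftFunctorAdd' 𝒯 a b c h).inv.app Y := by simp [hw']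
  exact hw ▸ ((H w').shift_map b).comp_right _

end Ghosts

namespace DerivedCategory

variable {A : Type u} [Category.{v} A] [Abelian A] [HasDerivedCategory A]

lemma hom_singleFunctor_eq_zero_of_projective {P M : A} [Projective P] {a b : ℤ} (hab : a ≠ b)
    (φ : (singleFunctor A a).obj P ⟶ (singleFunctor A b).obj M) : φ = 0 := by
  rcases lt_or_gt_of_ne hab with h | h
  · exact TStructure.t.zero φ a b h
  · exact from_singleFunctor_obj_eq_zero_of_projective
      (L := (CochainComplex.singleFunctor A b).obj M) φ b h

lemma hom_from_shift_singleFunctor_eq_zero_of_projective {P M : A} [Projective P] {k : ℤ}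
    (hk : k ≠ 0) (φ : ((singleFunctor A 0).obj P)⟦k⟧ ⟶ (singleFunctor A 0).obj M) : φ = 0 := by
  let e := ((singleFunctors A).shiftIso k (-k) 0 (by lia)).app P
  rw [← e.hom_inv_id_assoc φ, hom_singleFunctor_eq_zero_of_projective (by lia) (e.inv ≫ φ),
    comp_zero]

lemma hom_to_shift_singleFunctor_eq_zero_of_projective {P N : A} [Projective P] (n : ℕ)
    (φ : (singleFunctor A 0).obj P ⟶ ((singleFunctor A 0).obj N)⟦((n + 1 : ℕ) : ℤ)⟧) :
    φ = 0 := by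
  have := hasExt_of_hasDerivedCategory A
  simpa using congrArg Abelian.Ext.hom
    (Abelian.Ext.eq_zero_of_projective (Abelian.Ext.homEquiv.symm φ))

lemma isGhost_singleδ {S : ShortComplex A} (hS : S.ShortExact) :
    IsGhost (DerivedCategory A) (ProjCls A) hS.singleδ := by
  rintro _ ⟨P, hP, ⟨e⟩⟩ k g
  suffices H : ∀ g' : ((singleFunctor A 0).obj P)⟦k⟧ ⟶ (singleFunctor A 0).obj S.X₃,
      g' ≫ hS.singleδ = 0 by
    calc g ≫ hS.singleδ = e.hom⟦k⟧' ≫ (e.inv⟦k⟧' ≫ g) ≫ hS.singleδ := by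
          simp [← Functor.map_comp_assoc]
      _ = 0 := by rw [H, comp_zero]
  intro g'
  obtain rfl | hk := eq_or_ne k 0
  · let e₀ := (shiftFunctorZero (DerivedCategory A) ℤ).app ((singleFunctor A 0).obj P)
    obtain ⟨g₀, hg₀⟩ := (singleFunctor A 0).map_surjective (e₀.inv ≫ g')
    have : Epi S.g := hS.epi_g
    have hg' : g' = e₀.hom ≫ (singleFunctor A 0).map (Projective.factorThru g₀ S.g) ≫
        (singleFunctor A 0).map S.g := by
      rw [← Functor.map_comp, Projective.factorThru_comp, hg₀, e₀.hom_inv_id_assoc]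
    have hgδ : (singleFunctor A 0).map S.g ≫ hS.singleδ = 0 :=
      comp_distTriang_mor_zero₂₃ _ hS.singleTriangle_distinguished
    rw [hg', Category.assoc, Category.assoc, hgδ, comp_zero, comp_zero]
  · rw [hom_from_shift_singleFunctor_eq_zero_of_projective hk g', zero_comp]

lemma ghostPow_of_singleFunctor [EnoughProjectives A] (n : ℕ) (M N : A)
    (f : (singleFunctor A 0).obj M ⟶ ((singleFunctor A 0).obj N)⟦(n : ℤ)⟧) :
    GhostPow (DerivedCategory A) (ProjCls A) n f := by
  induction n generalizing M with
  | zero => exact .zero f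
  | succ n ih =>
    let S := ShortComplex.mk (kernel.ι (Projective.π M)) (Projective.π M) (kernel.condition _)
    have hS : S.ShortExact := { exact := S.exact_of_f_is_kernel (kernelIsKernel _) }
    have hpf : (singleFunctor A 0).map S.g ≫ f = 0 :=
      hom_to_shift_singleFunctor_eq_zero_of_projective n _
    obtain ⟨w, rfl⟩ := Triangle.yoneda_exact₃ _ hS.singleTriangle_distinguished f hpf
    exact .comp _ w (isGhost_singleδ hS)
      (ghostPow_shift_of_forall_ghostPow (by push_cast; rfl) (ih S.X₁) w)

end DerivedCategory

section Bounded

open DerivedCategory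

variable {A : Type u} [Category.{v} A] [Abelian A] [HasDerivedCategory A]

lemma bdd_of_isGE_of_isLE (X : DerivedCategory A) (a b : ℤ) [X.IsGE a] [X.IsLE b] : Bdd A X :=
  ⟨a, b, fun i => Or.rec (X.isZero_of_isGE a i ·) (X.isZero_of_isLE b i ·)⟩

lemma bdd_singleFunctor_obj (a : ℤ) (X : A) : Bdd A ((singleFunctor A a).obj X) :=
  bdd_of_isGE_of_isLE _ a a

lemma Bdd.shift {X : DerivedCategory A} (hX : Bdd A X) (m : ℤ) : Bdd A (X⟦m⟧) := by
  obtain ⟨a, b, h⟩ := hX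
  have : X.IsGE a := (X.isGE_iff a).2 fun i hi => h i (.inl hi)
  have : X.IsLE b := (X.isLE_iff b).2 fun i hi => h i (.inr hi)
  have := TStructure.t.isGE_shift X a m (a - m)
  have := TStructure.t.isLE_shift X b m (b - m)
  exact bdd_of_isGE_of_isLE _ (a - m) (b - m)

end Bounded

/-- if `r` annihilates every `n`-fold composite of ghosts in `D^b(A)`, then
`r • Ext^n_A(M, N) = 0` for all `M, N ∈ A`, where
`Ext^n_A(M, N) = Hom_{D^b(A)}(M, N⟦n⟧)`. -/
theorem ext_annihilated_of_ghosts_annihilated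
    (R : Type*) [CommRing R] (A : Type u) [Category.{v} A] [Abelian A] [EnoughProjectives A]
    [HasDerivedCategory A] [Linear R (DerivedCategory A)]
    [∀ k : ℤ, Functor.Linear R (shiftFunctor (DerivedCategory A) k)]
    (r : R) (n : ℕ)
    (H : ∀ (X Y : DerivedCategory A), Bdd A X → Bdd A Y → ∀ f : X ⟶ Y,
      GhostPow (DerivedCategory A) (ProjCls A) n f → r • f = 0) :
    ∀ (M N : A) (f : (DerivedCategory.singleFunctor A 0).obj M ⟶
        ((DerivedCategory.singleFunctor A 0).obj N)⟦(n : ℤ)⟧),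
      r • f = 0 :=
  fun M N f => H _ _ (bdd_singleFunctor_obj 0 M) ((bdd_singleFunctor_obj 0 N).shift n) f
    (DerivedCategory.ghostPow_of_singleFunctor n M N f)
end

section
/- In a triangulated category, if g : X → Y is a morphism and f : P → X satisfies Hom-vanishing g∘f = 0, and X sits in a triangle P →^f X →^q T → ΣP where r·id_T = 0 for a central ring element r, then r·g factors through T; combined with the dual, one obtains: in an R-linear triangulated category, for any full subcategories with T = A * B where r·id = 0 on all objects of A and s·id = 0 on all objects of B, every endomorphism ideal satisfies (rs)·id_X = 0 for all X ∈ T. -/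
open CategoryTheory Limits Pretriangulated

universe v u

variable (C : Type u) [Category.{v} C] [Preadditive C] [HasZeroObject C]
  [HasShift C ℤ] [∀ n : ℤ, (shiftFunctor C n).Additive] [Pretriangulated C]

section Linear

variable {R : Type*} [Semiring R] {D : Type*} [Category D] [Preadditive D] [Linear R D]
  {r : R} {X Y : D}

lemma smul_eq_zero_of_smul_id_source_eq_zero (hX : r • 𝟙 X = 0) (g : X ⟶ Y) : r • g = 0 := by
  rw [← Category.id_comp g, ← Linear.smul_comp, hX, zero_comp]

lemma smul_eq_zero_of_smul_id_target_eq_zero (hY : r • 𝟙 Y = 0) (g : X ⟶ Y) : r • g = 0 := by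
  rw [← Category.comp_id g, ← Linear.comp_smul, hY, comp_zero]

end Linear

section Triangulated

variable {C}

lemma mul_smul_id_obj₂_eq_zero_of_distinguished {R : Type*} [Semiring R] [Linear R C]
    {r s : R} (T : Triangle C) (hT : T ∈ distTriang C)
    (hr : r • 𝟙 T.obj₁ = 0) (hs : s • 𝟙 T.obj₃ = 0) : (r * s) • 𝟙 T.obj₂ = 0 := by
  have hs₂ : (s • 𝟙 T.obj₂) ≫ T.mor₂ = 0 := by
    rw [Linear.smul_comp, Category.id_comp, smul_eq_zero_of_smul_id_target_eq_zero hs]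
  obtain ⟨t, ht⟩ := Triangle.coyoneda_exact₂ T hT _ hs₂
  rw [mul_smul, ht, ← Linear.comp_smul, smul_eq_zero_of_smul_id_source_eq_zero hr, comp_zero]

end Triangulated

/-- in an `R`-linear triangulated category, if every object `X` fits into a
distinguished triangle `A ⟶ X ⟶ B ⟶ A⟦1⟧` with `r • 𝟙 A = 0` for all `A ∈ 𝒜` and
`s • 𝟙 B = 0` for all `B ∈ ℬ`, then `(r * s) • 𝟙 X = 0` for every object `X`. -/
theorem kill_of_decomposition (R : Type*) [CommRing R] [Linear R C]
    [∀ n : ℤ, Functor.Linear R (shiftFunctor C n)]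
    (r s : R) (SA SB : Set C)
    (hA : ∀ A ∈ SA, r • (𝟙 A) = 0) (hB : ∀ B ∈ SB, s • (𝟙 B) = 0)
    (H : ∀ X : C, ∃ (A B : C) (f : A ⟶ X) (g : X ⟶ B) (h : B ⟶ A⟦(1 : ℤ)⟧),
      A ∈ SA ∧ B ∈ SB ∧ Triangle.mk f g h ∈ (distTriang C)) :
    ∀ X : C, (r * s) • (𝟙 X) = 0 := by
  intro X
  obtain ⟨A, B, f, g, h, hA_mem, hB_mem, hT⟩ := H X
  exact mul_smul_id_obj₂_eq_zero_of_distinguished _ hT (hA A hA_mem) (hB B hB_mem)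
end
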